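/- Fix an integer N ≥ 2, an integer r > 2, and a real p₁ with 0 < p₁ < 1. Let p be the probability vector on Fin r with p 0 = p₁ and p i = (1 - p₁)/(r - 1) for i ≠ 0, and set p* = (2 + √(2·(r-1)·(r-2)))/(2·r). For an integer c ≥ 2, let R(p,c) = 1 - (N/(2·(N-1))) · VI₂(p, u_c) denote the Rand index between the ground truth and a statistically independent balanced candidate partition with c clusters, where u_c is the uniform probability vector on Fin c. Then: (1) if p₁ > p*, then R(p,·) is strictly decreasing in c; (2) if p₁ = p*, then R(p,·) is constant in c; (3) if p₁ < p*, then R(p,·) is strictly increasing in c. -/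

import Mathlib

/-- The quadratic entropy of a finitely supported probability vector. -/
noncomputable def quadEntropy {α : Type*} [Fintype α] (x : α → ℝ) : ℝ :=
  2 * (1 - ∑ i, (x i) ^ 2)

/-- The quadratic variation of information between (the distributions of)
two statistically independent partitions. -/
noncomputable def VI2 {α β : Type*} [Fintype α] [Fintype β] (p : α → ℝ) (q : β → ℝ) : ℝ :=
  2 * quadEntropy (fun ij : α × β => p ij.1 * q ij.2) - quadEntropy p - quadEntropy q

/-- The uniform (balanced) probability vector on `Fin c`. -/
noncomputable def unif (c : ℕ) : Fin c → ℝ := fun _ => 1 / (c : ℝ)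

/-- The (expected) Rand index between a ground-truth distribution `p` and a
statistically independent balanced candidate partition with `c` clusters. -/
noncomputable def randGT (N : ℕ) {r : ℕ} (p : Fin r → ℝ) (c : ℕ) : ℝ :=
  1 - ((N : ℝ) / (2 * ((N : ℝ) - 1))) * VI2 p (unif c)

/-! Writing `S = ∑ i, p i ^ 2`, the quadratic entropies multiply out over the product with a
uniform vector, and `R(p, c) = 1 - N/(N-1) · (S + (1 - 2S)/c)`: an affine function of `1/c`
whose slope has the sign of `2S - 1`. For the skewed vector, `S = p₁² + (1 - p₁)²/(r - 1)`, and
`S - 1/2` is a quadratic in `p₁` with roots `(2 ± √(2(r-1)(r-2)))/(2r)`. For `r ≥ 3` the smaller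
root is `≤ 0`, so for `p₁ > 0` the sign of `S - 1/2` is the sign of `p₁ - p*`. -/

theorem sum_sq_mul_eq_mul_sum_sq {α β : Type*} [Fintype α] [Fintype β] (p : α → ℝ) (q : β → ℝ) :
    ∑ ij : α × β, (p ij.1 * q ij.2) ^ 2 = (∑ i, p i ^ 2) * ∑ j, q j ^ 2 := by
  simp only [Fintype.sum_prod_type, mul_pow, Fintype.sum_mul_sum]

theorem VI2_eq {α β : Type*} [Fintype α] [Fintype β] (p : α → ℝ) (q : β → ℝ) :
    VI2 p q = 2 * (∑ i, p i ^ 2 + ∑ j, q j ^ 2 - 2 * (∑ i, p i ^ 2) * ∑ j, q j ^ 2) := by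
  unfold VI2 quadEntropy
  rw [sum_sq_mul_eq_mul_sum_sq]
  ring

theorem sum_sq_unif (c : ℕ) : ∑ j, unif c j ^ 2 = 1 / (c : ℝ) := by
  rcases eq_or_ne c 0 with rfl | hc
  · simp
  · simp only [unif, Finset.sum_const, Finset.card_univ, Fintype.card_fin, nsmul_eq_mul]
    field_simp

theorem randGT_eq (N : ℕ) {r : ℕ} (p : Fin r → ℝ) (c : ℕ) :
    randGT N p c =
      1 - (N : ℝ) / (N - 1) * (∑ i, p i ^ 2 + (1 - 2 * ∑ i, p i ^ 2) / c) := by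
  rw [randGT, VI2_eq, sum_sq_unif]
  rcases eq_or_ne ((N : ℝ) - 1) 0 with hN | hN
  · simp [hN]
  · field_simp
    ring

section Monotonicity

variable {N r : ℕ} {p : Fin r → ℝ}

theorem randGT_eq_of_sum_sq_eq_half (h : ∑ i, p i ^ 2 = 1 / 2) (c : ℕ) :
    randGT N p c = 1 - (N : ℝ) / (2 * (N - 1)) := by
  rw [randGT_eq, h, mul_comm (2 : ℝ), ← div_div]
  ring

theorem natCast_div_natCast_sub_one_pos (hN : 1 < N) : 0 < (N : ℝ) / (N - 1) := by
  have : (1 : ℝ) < N := by exact_mod_cast hN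
  exact div_pos (by linarith) (by linarith)

theorem randGT_strictAntiOn_of_half_lt_sum_sq (hN : 1 < N) (h : 1 / 2 < ∑ i, p i ^ 2) :
    StrictAntiOn (randGT N p) (Set.Ioi 0) := by
  intro a ha b _ hab
  have hK := natCast_div_natCast_sub_one_pos hN
  have ha : (0 : ℝ) < a := by exact_mod_cast ha
  have hab : (a : ℝ) < b := by exact_mod_cast hab
  rw [randGT_eq, randGT_eq]
  have : (1 - 2 * ∑ i, p i ^ 2) / a < (1 - 2 * ∑ i, p i ^ 2) / b := by
    rw [div_lt_div_iff₀ ha (ha.trans hab)]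
    nlinarith
  gcongr

theorem randGT_strictMonoOn_of_sum_sq_lt_half (hN : 1 < N) (h : ∑ i, p i ^ 2 < 1 / 2) :
    StrictMonoOn (randGT N p) (Set.Ioi 0) := by
  intro a ha b _ hab
  have hK := natCast_div_natCast_sub_one_pos hN
  have ha : (0 : ℝ) < a := by exact_mod_cast ha
  have hab : (a : ℝ) < b := by exact_mod_cast hab
  rw [randGT_eq, randGT_eq]
  have : (1 - 2 * ∑ i, p i ^ 2) / b < (1 - 2 * ∑ i, p i ^ 2) / a := by
    gcongr
    linarith
  gcongr

end Monotonicity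

theorem sum_sq_of_skewed {r : ℕ} [NeZero r] {p : Fin r → ℝ} {p₁ : ℝ} (hp0 : p 0 = p₁)
    (hpi : ∀ i : Fin r, i ≠ 0 → p i = (1 - p₁) / ((r : ℝ) - 1)) :
    ∑ i, p i ^ 2 = p₁ ^ 2 + (1 - p₁) ^ 2 / (r - 1) := by
  rw [← Finset.add_sum_erase _ _ (Finset.mem_univ 0), hp0,
    Finset.sum_congr rfl fun i hi => by rw [hpi i (Finset.ne_of_mem_erase hi)],
    Finset.sum_const, Finset.card_erase_of_mem (Finset.mem_univ _), Finset.card_univ,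
    Fintype.card_fin, nsmul_eq_mul, Nat.cast_pred (Nat.pos_of_neZero r)]
  rcases eq_or_ne ((r : ℝ) - 1) 0 with hr | hr
  · simp [hr]
  · field_simp

noncomputable def skewThreshold (r : ℝ) : ℝ := (2 + √(2 * (r - 1) * (r - 2))) / (2 * r)

theorem exists_pos_sq_add_sq_div_sub_half_eq {r p₁ : ℝ} (hr : 3 ≤ r) (hp₁ : 0 < p₁) :
    ∃ κ > 0, p₁ ^ 2 + (1 - p₁) ^ 2 / (r - 1) - 1 / 2 = κ * (p₁ - skewThreshold r) := by
  set s := √(2 * (r - 1) * (r - 2)) with hs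
  have hs_sq : s ^ 2 = 2 * (r - 1) * (r - 2) := Real.sq_sqrt (by nlinarith)
  have hs_two : 2 ≤ s := Real.le_sqrt_of_sq_le (by nlinarith)
  refine ⟨(2 * r * p₁ - 2 + s) / (2 * (r - 1)), div_pos (by nlinarith) (by linarith), ?_⟩
  have hr₀ : r ≠ 0 := by positivity
  have hr₁ : r - 1 ≠ 0 := by linarith
  rw [skewThreshold, ← hs]
  field_simp
  linear_combination hs_sq

theorem randGT_bias_skewed_ground_truth_general {N r : ℕ} [NeZero r] (hN : 2 ≤ N) (hr : 2 < r)
    (p₁ : ℝ) (hp₁ : 0 < p₁)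
    (p : Fin r → ℝ) (hp0 : p 0 = p₁) (hpi : ∀ i : Fin r, i ≠ 0 → p i = (1 - p₁) / ((r : ℝ) - 1)) :
    ((2 + Real.sqrt (2 * ((r : ℝ) - 1) * ((r : ℝ) - 2))) / (2 * (r : ℝ)) < p₁ →
      ∀ c c' : ℕ, 2 ≤ c → c < c' → randGT N p c' < randGT N p c) ∧
    (p₁ = (2 + Real.sqrt (2 * ((r : ℝ) - 1) * ((r : ℝ) - 2))) / (2 * (r : ℝ)) →
      ∀ c c' : ℕ, 2 ≤ c → 2 ≤ c' → randGT N p c = randGT N p c') ∧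
    (p₁ < (2 + Real.sqrt (2 * ((r : ℝ) - 1) * ((r : ℝ) - 2))) / (2 * (r : ℝ)) →
      ∀ c c' : ℕ, 2 ≤ c → c < c' → randGT N p c < randGT N p c') := by
  have hr : (3 : ℝ) ≤ r := by exact_mod_cast hr
  obtain ⟨κ, hκ, hS⟩ := exists_pos_sq_add_sq_div_sub_half_eq hr hp₁
  rw [← sum_sq_of_skewed hp0 hpi, skewThreshold] at hS
  refine ⟨fun h c c' hc hcc' => ?_, fun h c c' _ _ => ?_, fun h c c' hc hcc' => ?_⟩
  · have hS : 1 / 2 < ∑ i, p i ^ 2 := by linarith [mul_pos hκ (sub_pos.2 h)]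
    exact randGT_strictAntiOn_of_half_lt_sum_sq hN hS (Set.mem_Ioi.2 (by omega))
      (Set.mem_Ioi.2 (by omega)) hcc'
  · have hS : ∑ i, p i ^ 2 = 1 / 2 := by rw [h, sub_self, mul_zero] at hS; linarith
    rw [randGT_eq_of_sum_sq_eq_half hS, randGT_eq_of_sum_sq_eq_half hS]
  · have hS : ∑ i, p i ^ 2 < 1 / 2 := by linarith [mul_neg_of_pos_of_neg hκ (sub_neg.2 h)]
    exact randGT_strictMonoOn_of_sum_sq_lt_half hN hS (Set.mem_Ioi.2 (by omega))
      (Set.mem_Ioi.2 (by omega)) hcc'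

theorem randGT_bias_skewed_ground_truth {N r : ℕ} [NeZero r] (hN : 2 ≤ N) (hr : 2 < r)
    (p₁ : ℝ) (hp₁ : 0 < p₁) (hp₁' : p₁ < 1)
    (p : Fin r → ℝ) (hp0 : p 0 = p₁) (hpi : ∀ i : Fin r, i ≠ 0 → p i = (1 - p₁) / ((r : ℝ) - 1)) :
    ((2 + Real.sqrt (2 * ((r : ℝ) - 1) * ((r : ℝ) - 2))) / (2 * (r : ℝ)) < p₁ →
      ∀ c c' : ℕ, 2 ≤ c → c < c' → randGT N p c' < randGT N p c) ∧
    (p₁ = (2 + Real.sqrt (2 * ((r : ℝ) - 1) * ((r : ℝ) - 2))) / (2 * (r : ℝ)) →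
      ∀ c c' : ℕ, 2 ≤ c → 2 ≤ c' → randGT N p c = randGT N p c') ∧
    (p₁ < (2 + Real.sqrt (2 * ((r : ℝ) - 1) * ((r : ℝ) - 2))) / (2 * (r : ℝ)) →
      ∀ c c' : ℕ, 2 ≤ c → c < c' → randGT N p c < randGT N p c') :=
  randGT_bias_skewed_ground_truth_general hN hr p₁ hp₁ p hp0 hpi
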